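/- Let u = α_n...α_1 be a mixed cyclic string (containing both direct and inverse syllables, with t(α_n) = s(α_1)). Then u^n is a string for all n ≥ 2 if and only if u² is a string. -/

import Mathlib

/-- A quiver with a set of monomial relations, presenting a string algebra. -/
structure SAQuiver where
  V : Type
  A : Type
  src : A → V
  tgt : A → V
  rel : Set (List A)

namespace SA

variable (S : SAQuiver)

/-- A syllable: a direct arrow (`Sum.inl`) or the formal inverse of an arrow (`Sum.inr`). -/
abbrev Syl := S.A ⊕ S.A

/-- A word of syllables, listed in order of traversal (the head is the first,
i.e. rightmost, syllable in the usual right-to-left notation `αₙ…α₁`). -/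
abbrev Word := List (Syl S)

def sylSrc : Syl S → S.V
  | Sum.inl a => S.src a
  | Sum.inr a => S.tgt a

def sylTgt : Syl S → S.V
  | Sum.inl a => S.tgt a
  | Sum.inr a => S.src a

def sylInv : Syl S → Syl S
  | Sum.inl a => Sum.inr a
  | Sum.inr a => Sum.inl a

/-- Consecutive syllables compose as a walk. -/
def IsWalk : Word S → Prop
  | [] => True
  | [_] => True
  | x :: y :: l => sylTgt S x = sylSrc S y ∧ IsWalk (y :: l)

/-- No two consecutive syllables are inverse to each other. -/
def Reduced : Word S → Prop
  | x :: y :: l => y ≠ sylInv S x ∧ Reduced (y :: l)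
  | _ => True

/-- No subword is a relation or the inverse of a relation. -/
def AvoidsRel (w : Word S) : Prop :=
  ∀ p ∈ S.rel, ¬ ((p.map (Sum.inl : S.A → Syl S)) <:+: w) ∧
    ¬ ((p.map (Sum.inr : S.A → Syl S)).reverse <:+: w)

/-- A (finite, nonempty) string. -/
def IsStr (w : Word S) : Prop :=
  w ≠ [] ∧ IsWalk S w ∧ Reduced S w ∧ AvoidsRel S w

def wSrc : Word S → Option S.V
  | [] => none
  | x :: _ => some (sylSrc S x)

def wTgt (w : Word S) : Option S.V := w.getLast?.map (sylTgt S)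

/-- A cyclic word: its target equals its source. -/
def Cyclic (w : Word S) : Prop := w ≠ [] ∧ wSrc S w = wTgt S w

/-- The `n`-th power of a word under concatenation. -/
def pow (w : Word S) (n : ℕ) : Word S := (List.replicate n w).flatten

/-- A word containing both a direct and an inverse syllable. -/
def Mixed (w : Word S) : Prop := (∃ a, Sum.inl a ∈ w) ∧ (∃ a, Sum.inr a ∈ w)

/-- A word that is not a proper power of a shorter word. -/
def Primitive (w : Word S) : Prop := ¬ ∃ (u : Word S) (k : ℕ), 2 ≤ k ∧ w = pow S u k

/-- A rotation (cyclic permutation) of a word. -/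
def IsRotation (u w : Word S) : Prop := ∃ l₁ l₂ : Word S, w = l₁ ++ l₂ ∧ u = l₂ ++ l₁

/-- A band: a primitive mixed cyclic string, all of whose powers are strings, whose first
syllable is inverse and whose last syllable is direct. -/
def IsBand (w : Word S) : Prop :=
  IsStr S w ∧ Cyclic S w ∧ Primitive S w ∧
    (∃ a, w.head? = some (Sum.inr a)) ∧ (∃ a, w.getLast? = some (Sum.inl a)) ∧
    ∀ n : ℕ, 1 ≤ n → IsStr S (pow S w n)

/-- A cyclic permutation of a band. -/
def RotOfBand (u : Word S) : Prop := ∃ b, IsBand S b ∧ IsRotation S u b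

/-- A prime band: no cyclic permutation of it is a concatenation of two or more cyclic
permutations of bands. -/
def IsPrimeBand (w : Word S) : Prop :=
  IsBand S w ∧
    ¬ ∃ (w' : Word S) (parts : List (Word S)), IsRotation S w' w ∧ 2 ≤ parts.length ∧
        w' = parts.flatten ∧ ∀ p ∈ parts, RotOfBand S p

/-- A word containing no cyclic permutation of a band as a subword. -/
def BandFree (w : Word S) : Prop := ¬ ∃ u, RotOfBand S u ∧ u <:+: w

/-- A word all of whose syllables are direct. -/
def DirectWord (w : Word S) : Prop := ∀ x ∈ w, ∃ a, x = Sum.inl a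

/-- A word all of whose syllables are inverse. -/
def InverseWord (w : Word S) : Prop := ∀ x ∈ w, ∃ a, x = Sum.inr a

/-- A string which is a substring of a cyclic permutation of a band. -/
def Extendable (w : Word S) : Prop := ∃ u, RotOfBand S u ∧ w <:+: u

/-- The axioms for `(Q, ρ)` to present a string algebra. -/
def IsStringAlgebra : Prop :=
  Finite S.V ∧ Finite S.A ∧
  (∀ p ∈ S.rel, p ≠ [] ∧ IsWalk S (p.map (Sum.inl : S.A → Syl S))) ∧
  {p : List S.A | p ≠ [] ∧ IsWalk S (p.map (Sum.inl : S.A → Syl S)) ∧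
      ∀ q ∈ S.rel, ¬ (q <:+: p)}.Finite ∧
  (∀ v : S.V, ¬ ∃ a b c : S.A, a ≠ b ∧ b ≠ c ∧ a ≠ c ∧
      S.src a = v ∧ S.src b = v ∧ S.src c = v) ∧
  (∀ v : S.V, ¬ ∃ a b c : S.A, a ≠ b ∧ b ≠ c ∧ a ≠ c ∧
      S.tgt a = v ∧ S.tgt b = v ∧ S.tgt c = v) ∧
  (∀ b c₁ c₂ : S.A, c₁ ≠ c₂ → IsStr S [Sum.inl b, Sum.inl c₁] →
      ¬ IsStr S [Sum.inl b, Sum.inl c₂]) ∧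
  (∀ b a₁ a₂ : S.A, a₁ ≠ a₂ → IsStr S [Sum.inl a₁, Sum.inl b] →
      ¬ IsStr S [Sum.inl a₂, Sum.inl b])

end SA

namespace SA

variable (S : SAQuiver)

/-! ### Sign functions and hammocks -/

/-- `σ` of a syllable: `σ(a) = σ a`, `σ(B) = ε b`. -/
def sylSg (σ ε : S.A → ℤ) : Syl S → ℤ
  | Sum.inl a => σ a
  | Sum.inr a => ε a

/-- `ε` of a syllable: `ε(a) = ε a`, `ε(B) = σ b`. -/
def sylEp (σ ε : S.A → ℤ) : Syl S → ℤ
  | Sum.inl a => ε a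
  | Sum.inr a => σ a

/-- The conditions on the chosen sign maps `σ, ε : Q₁ → {±1}`. -/
def SignOK (σ ε : S.A → ℤ) : Prop :=
  (∀ a, σ a = 1 ∨ σ a = -1) ∧ (∀ a, ε a = 1 ∨ ε a = -1) ∧
  (∀ a b, a ≠ b → S.src a = S.src b → σ a = -σ b) ∧
  (∀ a b, a ≠ b → S.tgt a = S.tgt b → ε a = -ε b) ∧
  (∀ c b : S.A, IsStr S [Sum.inl c, Sum.inl b] → σ b = -ε c)

/-- Membership in the hammock `H_r(v)`: strings ending at `v` with `ε`-value `1`;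
the empty word stands for the lazy string `1_{(v,1)}`. -/
def HrMem (σ ε : S.A → ℤ) (v : S.V) (w : Word S) : Prop :=
  w = [] ∨ (IsStr S w ∧ wTgt S w = some v ∧
    ∃ s, w.getLast? = some s ∧ sylEp S σ ε s = 1)

/-- The order `<_r` on `H_r(v)`:  `u <_r v` iff `v = u a x`, or `u = v B y`, or
`v = z a x ∧ u = z B y`. -/
def ltr (u v : Word S) : Prop :=
  (∃ (a : S.A) (x : Word S), v = x ++ [Sum.inl a] ++ u) ∨
  (∃ (b : S.A) (y : Word S), u = y ++ [Sum.inr b] ++ v) ∨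
  (∃ (a b : S.A) (x y z : Word S),
      v = x ++ [Sum.inl a] ++ z ∧ u = y ++ [Sum.inr b] ++ z)

/-- The inverse of a word. -/
def wInv (w : Word S) : Word S := (w.map (sylInv S)).reverse

/-- Membership in the hammock `H_l(v)`: strings starting at `v` with `σ`-value `-1`;
the empty word stands for the lazy string `1_{(v,-1)}`'s role in `H_l(v)`. -/
def HlMem (σ ε : S.A → ℤ) (v : S.V) (w : Word S) : Prop :=
  w = [] ∨ (IsStr S w ∧ wSrc S w = some v ∧
    ∃ s, w.head? = some s ∧ sylSg S σ ε s = -1)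

/-- The order `<_l` on `H_l(v)`: `u <_l v` iff `v⁻¹ <_r u⁻¹`. -/
def ltl (u v : Word S) : Prop := ltr S (wInv S v) (wInv S u)

/-- `v` is the direct successor of `u` in the total order `lt` restricted to `P`. -/
def DirSucc (P : Word S → Prop) (lt : Word S → Word S → Prop) (u v : Word S) : Prop :=
  P u ∧ P v ∧ lt u v ∧ ¬ ∃ w, P w ∧ lt u w ∧ lt w v

/-- A finite interval (chain of consecutive elements) in a hammock whose length sequence is
monotone. -/
def MonoChain (P : Word S → Prop) (lt : Word S → Word S → Prop) (n : ℕ)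
    (c : ℕ → Word S) : Prop :=
  (∀ i < n, DirSucc S P lt (c i) (c (i + 1))) ∧
  ((∀ i < n, (c i).length < (c (i + 1)).length) ∨
   (∀ i < n, (c (i + 1)).length < (c i).length))

/-- Torsion-freeness for one hammock: every finite interval with monotone length sequence
extends (on one of its two ends) to a strictly larger such interval. -/
def TFfor (P : Word S → Prop) (lt : Word S → Word S → Prop) : Prop :=
  ∀ (n : ℕ) (c : ℕ → Word S), MonoChain S P lt n c →
    ∃ c' : ℕ → Word S, MonoChain S P lt (n + 1) c' ∧
      ((∀ i ≤ n, c' i = c i) ∨ (∀ i ≤ n, c' (i + 1) = c i))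

/-- A torsion-free string algebra: both the left and right hammock conditions hold at
every vertex. -/
def TorsionFree (σ ε : S.A → ℤ) : Prop :=
  (∀ v : S.V, TFfor S (HrMem S σ ε v) (ltr S)) ∧
  (∀ v : S.V, TFfor S (HlMem S σ ε v) (ltl S))

/-! ### Bridges and the bridge quiver -/

/-- A weak bridge `b₁ → b₂`: a band-free string `u` (possibly of length zero) such that
`b₂ u b₁` is a string. -/
def IsWeakBridge (b₁ u b₂ : Word S) : Prop :=
  IsPrimeBand S b₁ ∧ IsPrimeBand S b₂ ∧ BandFree S u ∧ IsStr S (b₁ ++ u ++ b₂)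

/-- A bridge: a weak bridge which does not factor through another prime band. -/
def IsBridge (b₁ u b₂ : Word S) : Prop :=
  IsWeakBridge S b₁ u b₂ ∧
  ¬ ∃ (bb u₁ u₂ : Word S), IsPrimeBand S bb ∧ IsWeakBridge S b₁ u₁ bb ∧
      IsWeakBridge S bb u₂ b₂ ∧
      ((u = u₁ ++ u₂ ∧ u₁ ≠ [] ∧ u₂ ≠ []) ∨
       (∃ u₁' u₂' u₁'' u₂'' : Word S, u = u₁' ++ u₂' ∧ u₁' ≠ [] ∧ u₂' ≠ [] ∧
          u₁ = u₁' ++ u₁'' ∧ u₂ = u₂'' ++ u₂' ∧ bb = u₁'' ++ u₂''))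

/-- `R` is a set of representatives of the prime bands up to cyclic permutation. -/
def RepSet (R : Set (Word S)) : Prop :=
  (∀ r ∈ R, IsPrimeBand S r) ∧
  ∀ b, IsPrimeBand S b → ∃! r, r ∈ R ∧ IsRotation S b r

/-- One arrow of the bridge quiver with vertex set `R`. -/
def Step (R : Set (Word S)) (x y : Word S) : Prop :=
  x ∈ R ∧ y ∈ R ∧ ∃ u, IsBridge S x u y

/-- Reachability by a directed path in the bridge quiver. -/
def Reach (R : Set (Word S)) : Word S → Word S → Prop :=
  Relation.ReflTransGen (Step S R)

/-- Adjacency (in either direction) in the bridge quiver. -/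
def Adj (R : Set (Word S)) (x y : Word S) : Prop := Step S R x y ∨ Step S R y x

/-- Lying in the same connected component of the bridge quiver. -/
def SameComp (R : Set (Word S)) : Word S → Word S → Prop :=
  Relation.ReflTransGen (Adj S R)

/-- `x` lies on a meta-band, i.e. on a directed cycle of positive length in the bridge
quiver. -/
def OnMetaBand (R : Set (Word S)) (x : Word S) : Prop :=
  (∃ u, IsBridge S x u x ∧ u ≠ []) ∨
  (∃ y, y ≠ x ∧ y ∈ R ∧ Reach S R x y ∧ Reach S R y x)

/-- A meta-`⋃`-cyclic string algebra: each connected component of the bridge quiver has at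
least two vertices and is a union of meta-bands (every vertex and every arrow lies on a
directed cycle of positive length). -/
def MetaUCyclic (R : Set (Word S)) : Prop :=
  (∀ x ∈ R, ∃ y ∈ R, y ≠ x ∧ SameComp S R x y) ∧
  (∀ x ∈ R, OnMetaBand S R x) ∧
  (∀ x y u, x ∈ R → y ∈ R → IsBridge S x u y → Reach S R y x)

/-- A meta-torsion-free string algebra: each connected component of the bridge quiver has
at least two vertices, and every finite directed path of positive length extends to a
`ℤ`-indexed directed path. -/
def MetaTorsionFree (R : Set (Word S)) : Prop :=
  (∀ x ∈ R, ∃ y ∈ R, y ≠ x ∧ SameComp S R x y) ∧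
  (∀ (n : ℕ) (c e : ℕ → Word S), 0 < n → (∀ i ≤ n, c i ∈ R) →
    (∀ i < n, IsBridge S (c i) (e i) (c (i + 1))) →
    ∃ (g d : ℤ → Word S), (∀ i : ℤ, g i ∈ R) ∧
      (∀ i : ℤ, IsBridge S (g i) (d i) (g (i + 1))) ∧
      (∀ i : ℕ, i ≤ n → g (i : ℤ) = c i) ∧ (∀ i : ℕ, i < n → d (i : ℤ) = e i))

/-- A non-domestic string algebra: one with infinitely many bands. -/
def NonDomestic : Prop := ¬ {b : Word S | IsBand S b}.Finite

end SA

/-!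
Being a walk and being reduced are conditions on consecutive pairs of syllables, and every
consecutive pair in `uⁿ` already occurs in `u²`. A relation or an inverse relation is a path in
one direction, so it cannot contain the mixed word `u`; and an infix of `uⁿ` not containing
`u` is an infix of `u²`.
-/

namespace List

variable {α : Type*}

theorem infix_flatten_replicate {u q : List α} :
    ∀ {n : ℕ}, q <:+: (replicate n u).flatten → u <:+: q ∨ q <:+: u ++ u
  | 0, h => by
    rw [replicate_zero, flatten_nil, infix_nil] at h
    exact Or.inr (h ▸ nil_infix)
  | n + 1, h => by
    rw [replicate_succ, flatten_cons, infix_append_iff] at h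
    rcases h with h | h | ⟨l₁, l₂, rfl, hl₁, hl₂⟩
    · exact Or.inr (infix_append_of_infix_left h)
    · exact infix_flatten_replicate h
    · have straddle : l₂ <+: u → l₁ ++ l₂ <:+: u ++ u := fun hl₂u =>
        infix_append_iff.mpr (Or.inr (Or.inr ⟨l₁, l₂, rfl, hl₁, hl₂u⟩))
      cases n with
      | zero =>
        rw [replicate_zero, flatten_nil, prefix_nil] at hl₂
        exact Or.inr (straddle (hl₂ ▸ nil_prefix))
      | succ m =>
        rw [replicate_succ, flatten_cons] at hl₂
        rcases prefix_or_prefix_of_prefix hl₂ (prefix_append u _) with h | h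
        · exact Or.inr (straddle h)
        · exact Or.inl (h.isInfix.trans infix_append_right)

theorem isChain_flatten_replicate {R : α → α → Prop} {l : List α} (hl : l ≠ [])
    (h : IsChain R (l ++ l)) (n : ℕ) : IsChain R (replicate n l).flatten := by
  obtain ⟨hl_chain, -, hjoin⟩ := isChain_append.mp h
  rw [isChain_flatten (by simp [mem_replicate, hl.symm])]
  exact ⟨fun l' hl' => eq_of_mem_replicate hl' ▸ hl_chain, isChain_replicate_of_rel n hjoin⟩

end List

namespace SA

variable {S : SAQuiver}

theorem isWalk_iff_isChain : ∀ w : Word S,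
    IsWalk S w ↔ List.IsChain (fun x y => sylTgt S x = sylSrc S y) w
  | [] => by simp [IsWalk]
  | [_] => by simp [IsWalk]
  | _ :: y :: l => by simp [IsWalk, isWalk_iff_isChain (y :: l)]

theorem reduced_iff_isChain : ∀ w : Word S,
    Reduced S w ↔ List.IsChain (fun x y => y ≠ sylInv S x) w
  | [] => by simp [Reduced]
  | [_] => by simp [Reduced]
  | _ :: y :: l => by simp [Reduced, reduced_iff_isChain (y :: l)]

theorem pow_two_eq (u : Word S) : pow S u 2 = u ++ u := by
  simp [pow, List.replicate]

theorem Mixed.ne_nil {u : Word S} (hm : Mixed S u) : u ≠ [] := by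
  rintro rfl
  simp [Mixed] at hm

theorem Mixed.avoidsRel_pow {u : Word S} (hm : Mixed S u) (h : AvoidsRel S (u ++ u))
    (n : ℕ) : AvoidsRel S (pow S u n) := by
  intro p hp
  obtain ⟨⟨a, ha⟩, ⟨b, hb⟩⟩ := hm
  constructor
  · intro hinf
    rcases List.infix_flatten_replicate hinf with hcontains | hsq
    · simpa using hcontains.subset hb
    · exact (h p hp).1 hsq
  · intro hinf
    rcases List.infix_flatten_replicate hinf with hcontains | hsq
    · simpa using hcontains.subset ha
    · exact (h p hp).2 hsq

theorem Mixed.isStr_pow {u : Word S} (hm : Mixed S u) (h : IsStr S (pow S u 2)) {n : ℕ}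
    (hn : n ≠ 0) : IsStr S (pow S u n) := by
  obtain ⟨-, hwalk, hred, hrel⟩ := h
  rw [pow_two_eq] at hwalk hred hrel
  refine ⟨?_, ?_, ?_, hm.avoidsRel_pow hrel n⟩
  · simp [pow, hn, hm.ne_nil]
  · rw [isWalk_iff_isChain] at hwalk ⊢
    exact List.isChain_flatten_replicate hm.ne_nil hwalk n
  · rw [reduced_iff_isChain] at hred ⊢
    exact List.isChain_flatten_replicate hm.ne_nil hred n

end SA

open SA in
theorem mixed_cyclic_powers_iff_square_general (S : SAQuiver)
    (u : Word S) (hm : Mixed S u) :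
    (∀ n : ℕ, 2 ≤ n → IsStr S (pow S u n)) ↔ IsStr S (pow S u 2) :=
  ⟨fun h => h 2 le_rfl, fun h2 _ hn => hm.isStr_pow h2 (by omega)⟩

open SA in
/-- For a mixed cyclic string `u`, all powers `u^n` (`n ≥ 2`) are strings if and only if
`u²` is a string. -/
theorem mixed_cyclic_powers_iff_square (S : SAQuiver) (hSA : SA.IsStringAlgebra S)
    (u : Word S) (hu : IsStr S u) (hc : Cyclic S u) (hm : Mixed S u) :
    (∀ n : ℕ, 2 ≤ n → IsStr S (pow S u n)) ↔ IsStr S (pow S u 2) :=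
  mixed_cyclic_powers_iff_square_general S u hm
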